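/- Let {A⁽ⁿ⁾}ₙ₌₁ᴺ be mutually independent random matrices whose rows within each matrix are independent. Then E[‖⟦A⁽¹⁾,…,A⁽ᴺ⁾⟧‖²_F] = ⟨ E[A⁽¹⁾ᵀA⁽¹⁾], …, E[A⁽ᴺ⁾ᵀA⁽ᴺ⁾] ⟩, the generalized inner product (sum of entrywise products) of the expected Gram matrices. -/

import Mathlib

/-!
Expanding the square, the squared Frobenius norm of the CP tensor is, for every outcome,
`∑ r s, ∏ n, (A⁽ⁿ⁾ᵀA⁽ⁿ⁾)_{rs}`: the sum over multi-indices of a product of entries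
factors into a product of sums over each mode. For fixed `r, s` the Gram entries of
different factors are functions of independent matrices, so the expectation of their
product is the product of their expectations.
-/

open MeasureTheory ProbabilityTheory

theorem Fintype.sum_sq_sum_prod_eq_sum_sum_prod_gram {R ι ρ : Type*}
    [CommSemiring R] [Fintype ι] [DecidableEq ι] [Fintype ρ] {κ : ι → Type*} [∀ n, Fintype (κ n)]
    (A : ∀ n, κ n → ρ → R) :
    ∑ i : ∀ n, κ n, (∑ r, ∏ n, A n (i n) r) ^ 2 = ∑ r, ∑ s, ∏ n, ∑ i, A n i r * A n i s := by
  simp_rw [Fintype.prod_sum, sq, Finset.sum_mul_sum, ← Finset.prod_mul_distrib]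
  rw [Finset.sum_comm]
  exact Finset.sum_congr rfl fun r _ => Finset.sum_comm

theorem ProbabilityTheory.iIndepFun.integrable_fun_prod {Ω ι 𝕜 : Type*} [MeasurableSpace Ω]
    {μ : Measure Ω} [Fintype ι] [RCLike 𝕜] {X : ι → Ω → 𝕜} (hX : iIndepFun X μ)
    (hint : ∀ i, Integrable (X i) μ) :
    Integrable (fun ω ↦ ∏ i, X i ω) μ := by
  have hmeas i : AEMeasurable (X i) μ := (hint i).aemeasurable
  have := hX.isProbabilityMeasure
  have (i : ι) : IsProbabilityMeasure (μ.map (X i)) := Measure.isProbabilityMeasure_map (hmeas i)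
  have hpi : Integrable (fun x : ι → 𝕜 ↦ ∏ i, x i) (μ.map fun ω i ↦ X i ω) := by
    rw [hX.map_fun_eq_pi_map hmeas]
    exact .fintype_prod fun i ↦
      (integrable_map_measure aestronglyMeasurable_id (hmeas i)).2 (hint i)
  exact (integrable_map_measure hpi.aestronglyMeasurable (by fun_prop)).1 hpi

theorem expected_cp_frobenius_sq_gram_general
    {Ω : Type*} [MeasurableSpace Ω] (μ : Measure Ω)
    {N R : ℕ} {I : Fin N → ℕ}
    (A : ∀ n, Ω → Fin (I n) → Fin R → ℝ)
    (hindep : iIndepFun A μ)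
    (hint : ∀ n (i : Fin (I n)) (r s : Fin R),
      Integrable (fun ω => A n ω i r * A n ω i s) μ) :
    (∫ ω, ∑ i : ∀ n, Fin (I n), (∑ r : Fin R, ∏ n, A n ω (i n) r) ^ 2 ∂μ)
      = ∑ r : Fin R, ∑ s : Fin R,
          ∏ n, ∫ ω, ∑ i : Fin (I n), A n ω i r * A n ω i s ∂μ := by
  have hgram_indep (r s : Fin R) :
      iIndepFun (fun n ω ↦ ∑ i : Fin (I n), A n ω i r * A n ω i s) μ :=
    hindep.comp (fun n M ↦ ∑ i, M i r * M i s) fun n ↦ by fun_prop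
  have hgram_int (r s : Fin R) (n : Fin N) :
      Integrable (fun ω ↦ ∑ i : Fin (I n), A n ω i r * A n ω i s) μ :=
    integrable_finsetSum _ fun i _ ↦ hint n i r s
  simp_rw [Fintype.sum_sq_sum_prod_eq_sum_sum_prod_gram]
  rw [integral_finsetSum _ fun r _ ↦ integrable_finsetSum _ fun s _ ↦
    (hgram_indep r s).integrable_fun_prod (hgram_int r s)]
  refine Finset.sum_congr rfl fun r _ ↦ ?_
  rw [integral_finsetSum _ fun s _ ↦ (hgram_indep r s).integrable_fun_prod (hgram_int r s)]
  exact Finset.sum_congr rfl fun s _ ↦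
    (hgram_indep r s).integral_fun_prod_eq_prod_integral fun n ↦ (hgram_int r s n).1

/-- Lemma 4: for mutually independent random factor matrices with independent rows, the
expected squared Frobenius norm of the CP tensor equals the generalized inner product of
the expected Gram matrices. -/
theorem expected_cp_frobenius_sq_gram
    {Ω : Type*} [MeasurableSpace Ω] (μ : Measure Ω) [IsProbabilityMeasure μ]
    {N R : ℕ} {I : Fin N → ℕ}
    (A : ∀ n, Ω → Fin (I n) → Fin R → ℝ)
    (hmeas : ∀ n, Measurable (A n))
    (hindep : iIndepFun A μ)
    (hrows : ∀ n, iIndepFun (fun i ω => A n ω i) μ)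
    (hint : ∀ n (i : Fin (I n)) (r s : Fin R),
      Integrable (fun ω => A n ω i r * A n ω i s) μ) :
    (∫ ω, ∑ i : ∀ n, Fin (I n), (∑ r : Fin R, ∏ n, A n ω (i n) r) ^ 2 ∂μ)
      = ∑ r : Fin R, ∑ s : Fin R,
          ∏ n, ∫ ω, ∑ i : Fin (I n), A n ω i r * A n ω i s ∂μ :=
  expected_cp_frobenius_sq_gram_general μ A hindep hint
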